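/- Let A, B be positive definite matrices on a finite-dimensional Hilbert space with m·I ≤ A ≤ M·I and m·I ≤ B ≤ M·I for scalars 0 < m ≤ M, and let 0 ≤ t ≤ 1. Then for every unit vector x, ⟨(A♮_t B)x, x⟩ ≤ ((M^{1+t}+m^{1+t})²/(4 M^{1+t} m^{1+t})) · ⟨Ax,x⟩^{1-t} ⟨Bx,x⟩^t. -/

import Mathlib

/-! With `F = A⁻¹ ♯ B` one has `F A F = B` and `A ♮ₜ B = Fᵗ A Fᵗ`; put `y = Fᵗ x`.
The Kantorovich inequality bounds `⟨Ay, y⟩⟨A⁻¹y, y⟩` by `(M + m)² / (4Mm) · ⟨y, y⟩²`.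
Log-convexity of `s ↦ ⟨Fˢx, x⟩` (Hölder) gives `⟨y, y⟩ = ⟨F²ᵗx, x⟩ ≤ ⟨Fᵗx, x⟩¹⁻ᵗ ⟨F¹⁺ᵗx, x⟩ᵗ`,
and Cauchy–Schwarz for the form `A` bounds `⟨Fᵗx, x⟩² = ⟨y, x⟩²` by `⟨A⁻¹y, y⟩⟨Ax, x⟩` and
`⟨F¹⁺ᵗx, x⟩² = ⟨y, Fx⟩²` by `⟨A⁻¹y, y⟩⟨Bx, x⟩`. Cancelling `⟨A⁻¹y, y⟩` leaves the bound with
constant `(M + m)² / (4Mm)`, which grows with the ratio `M / m`, hence is at most the one for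
`M¹⁺ᵗ, m¹⁺ᵗ`. -/

open Matrix

variable {n : Type*} [Fintype n] [DecidableEq n]

/-- Real power of a matrix, defined via the spectral decomposition for Hermitian matrices. -/
noncomputable def mpow (A : Matrix n n ℝ) (t : ℝ) : Matrix n n ℝ :=
  if hA : A.IsHermitian then
    (hA.eigenvectorUnitary : Matrix n n ℝ) * Matrix.diagonal (fun i => hA.eigenvalues i ^ t) *
      star (hA.eigenvectorUnitary : Matrix n n ℝ)
  else A

/-- The weighted geometric mean `A ♯ₜ B = A^{1/2} (A^{-1/2} B A^{-1/2})^t A^{1/2}`. -/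
noncomputable def gmean (t : ℝ) (A B : Matrix n n ℝ) : Matrix n n ℝ :=
  mpow A (1/2) * mpow (mpow A (-(1/2)) * B * mpow A (-(1/2))) t * mpow A (1/2)

/-- The weighted spectral geometric mean `A ♮ₜ B = (A⁻¹ ♯ B)^t A (A⁻¹ ♯ B)^t`. -/
noncomputable def smean (t : ℝ) (A B : Matrix n n ℝ) : Matrix n n ℝ :=
  mpow (gmean (1/2) A⁻¹ B) t * A * mpow (gmean (1/2) A⁻¹ B) t

theorem Finset.sum_rpow_mul_le_rpow_mul_rpow {ι : Type*} (s : Finset ι) {t : ℝ} (ht0 : 0 ≤ t)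
    (ht1 : t ≤ 1) (a b : ℝ) {μ ν : ι → ℝ} (hμ : ∀ i, 0 < μ i) (hν : ∀ i, 0 ≤ ν i) :
    ∑ i ∈ s, μ i ^ ((1 - t) * a + t * b) * ν i ≤
      (∑ i ∈ s, μ i ^ a * ν i) ^ (1 - t) * (∑ i ∈ s, μ i ^ b * ν i) ^ t := by
  obtain rfl | ht0 := ht0.eq_or_lt
  · simp
  have key := Real.inner_le_weight_mul_Lp_of_nonneg s (p := t⁻¹) (one_le_inv₀ ht0 |>.2 ht1)
    (fun i => μ i ^ a * ν i) (fun i => μ i ^ (t * (b - a)))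
    (fun i => mul_nonneg (Real.rpow_nonneg (hμ i).le _) (hν i))
    (fun i => Real.rpow_nonneg (hμ i).le _)
  have hinterp : ∀ i, μ i ^ a * ν i * μ i ^ (t * (b - a)) = μ i ^ ((1 - t) * a + t * b) * ν i :=
    fun i => by rw [mul_right_comm, ← Real.rpow_add (hμ i)]; ring_nf
  have hend : ∀ i, μ i ^ a * ν i * (μ i ^ (t * (b - a))) ^ t⁻¹ = μ i ^ b * ν i := fun i => by
    rw [← Real.rpow_mul (hμ i).le, mul_right_comm t, mul_inv_cancel₀ ht0.ne', one_mul,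
      mul_right_comm, ← Real.rpow_add (hμ i), add_sub_cancel]
  simpa only [hinterp, hend, inv_inv] using key

theorem Finset.sum_mul_mul_sum_inv_mul_le {ι : Type*} (s : Finset ι) {m M : ℝ} (hm : 0 < m)
    (hmM : m ≤ M) {d w : ι → ℝ} (hd : ∀ i ∈ s, d i ∈ Set.Icc m M) (hw : ∀ i ∈ s, 0 ≤ w i) :
    (∑ i ∈ s, d i * w i) * (∑ i ∈ s, (d i)⁻¹ * w i) ≤
      (M + m) ^ 2 / (4 * M * m) * (∑ i ∈ s, w i) ^ 2 := by
  have hM : 0 < M := hm.trans_le hmM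
  set X := ∑ i ∈ s, d i * w i
  set Y := ∑ i ∈ s, (d i)⁻¹ * w i
  have hlin : X + M * m * Y ≤ (M + m) * ∑ i ∈ s, w i := by
    rw [Finset.mul_sum, Finset.mul_sum, ← Finset.sum_add_distrib]
    refine Finset.sum_le_sum fun i hi => ?_
    obtain ⟨hmd, hdM⟩ := hd i hi
    have hd0 : 0 < d i := hm.trans_le hmd
    have hgap : M + m - (d i + M * m * (d i)⁻¹) = (M - d i) * (d i - m) / d i := by
      field_simp
      ring
    have hterm : d i + M * m * (d i)⁻¹ ≤ M + m := by
      have := div_nonneg (mul_nonneg (sub_nonneg.2 hdM) (sub_nonneg.2 hmd)) hd0.le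
      linarith
    nlinarith [hw i hi]
  have hX : 0 ≤ X := Finset.sum_nonneg fun i hi =>
    mul_nonneg (hm.trans_le (hd i hi).1).le (hw i hi)
  have hY : 0 ≤ Y := Finset.sum_nonneg fun i hi =>
    mul_nonneg (inv_nonneg.2 (hm.trans_le (hd i hi).1).le) (hw i hi)
  rw [div_mul_eq_mul_div, le_div_iff₀ (by positivity)]
  nlinarith [sq_nonneg (X - M * m * Y), mul_self_le_mul_self (by positivity) hlin]

theorem add_sq_div_mul_le_of_div_le {m M m' M' : ℝ} (hm : 0 < m) (hmM : m ≤ M) (hm' : 0 < m')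
    (h : M / m ≤ M' / m') :
    (M + m) ^ 2 / (4 * M * m) ≤ (M' + m') ^ 2 / (4 * M' * m') := by
  have hM : 0 < M := hm.trans_le hmM
  have hr : 1 ≤ M / m := (one_le_div hm).2 hmM
  have hM' : 0 < M' := hm'.trans_le ((one_le_div hm').1 (hr.trans h))
  have hratio : ∀ {a b : ℝ}, 0 < a → 0 < b →
      (a + b) ^ 2 / (4 * a * b) = (a / b + 1) ^ 2 / (4 * (a / b)) := fun ha hb => by
    field_simp
  rw [hratio hM hm, hratio hM' hm', div_le_div_iff₀ (by positivity) (by positivity)]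
  nlinarith [mul_nonneg (sub_nonneg.2 h)
    (sub_nonneg.2 (one_le_mul_of_one_le_of_one_le hr (hr.trans h)))]

theorem add_sq_div_mul_le_rpow {m M t : ℝ} (hm : 0 < m) (hmM : m ≤ M) (ht : 0 ≤ t) :
    (M + m) ^ 2 / (4 * M * m) ≤
      (M ^ (1 + t) + m ^ (1 + t)) ^ 2 / (4 * M ^ (1 + t) * m ^ (1 + t)) := by
  refine add_sq_div_mul_le_of_div_le hm hmM (Real.rpow_pos_of_pos hm _) ?_
  rw [← Real.div_rpow (hm.le.trans hmM) hm.le]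
  exact Real.self_le_rpow_of_one_le ((one_le_div hm).2 hmM) (by linarith)

theorem sq_le_mul_rpow_mul_rpow {t q a b c d e : ℝ} (ht0 : 0 ≤ t) (ht1 : t ≤ 1) (hq : 0 < q)
    (hc : 0 ≤ c) (hd : 0 ≤ d) (he : 0 ≤ e)
    (h : e ≤ c ^ (1 - t) * d ^ t) (hca : c ^ 2 ≤ q * a) (hdb : d ^ 2 ≤ q * b) :
    e ^ 2 ≤ q * (a ^ (1 - t) * b ^ t) := by
  have ha : 0 ≤ a := nonneg_of_mul_nonneg_right ((sq_nonneg c).trans hca) hq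
  have hb : 0 ≤ b := nonneg_of_mul_nonneg_right ((sq_nonneg d).trans hdb) hq
  have hsq : ∀ {u : ℝ} (s : ℝ), 0 ≤ u → (u ^ s) ^ 2 = (u ^ 2) ^ s := fun s hu => by
    rw [← Real.rpow_mul_natCast hu, mul_comm, Real.rpow_natCast_mul hu]
  calc e ^ 2 ≤ (c ^ (1 - t) * d ^ t) ^ 2 := pow_le_pow_left₀ he h 2
    _ = (c ^ 2) ^ (1 - t) * (d ^ 2) ^ t := by rw [mul_pow, hsq _ hc, hsq _ hd]
    _ ≤ (q * a) ^ (1 - t) * (q * b) ^ t := by gcongr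
    _ = q * (a ^ (1 - t) * b ^ t) := by
      rw [Real.mul_rpow hq.le ha, Real.mul_rpow hq.le hb, mul_mul_mul_comm, ← Real.rpow_add hq,
        sub_add_cancel, Real.rpow_one]

namespace Matrix

section RCLike

variable {𝕜 : Type*} [RCLike 𝕜] {A : Matrix n n 𝕜}
open scoped ComplexOrder MatrixOrder

lemma IsHermitian.le_eigenvalues (hA : A.IsHermitian) {m : ℝ} (hmA : (A - m • 1).PosSemidef)
    (i : n) : m ≤ hA.eigenvalues i := by
  have hle : algebraMap ℝ (Matrix n n 𝕜) m ≤ A := by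
    rwa [Matrix.le_iff, Algebra.algebraMap_eq_smul_one]
  exact (algebraMap_le_iff_le_spectrum hA.isSelfAdjoint).1 hle _
    (hA.eigenvalues_mem_spectrum_real i)

lemma IsHermitian.eigenvalues_le (hA : A.IsHermitian) {M : ℝ} (hAM : (M • 1 - A).PosSemidef)
    (i : n) : hA.eigenvalues i ≤ M := by
  have hle : A ≤ algebraMap ℝ (Matrix n n 𝕜) M := by
    rwa [Matrix.le_iff, Algebra.algebraMap_eq_smul_one]
  exact (le_algebraMap_iff_spectrum_le hA.isSelfAdjoint).1 hle _
    (hA.eigenvalues_mem_spectrum_real i)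

lemma PosDef.mul_mul_of_isHermitian {B P : Matrix n n 𝕜} (hB : B.PosDef) (hP : P.IsHermitian)
    (hPu : IsUnit P) : (P * B * P).PosDef := by
  simpa only [hP.eq] using hB.conjTranspose_mul_mul_same (mulVec_injective_iff_isUnit.2 hPu)

end RCLike

variable {A B : Matrix n n ℝ}

lemma IsHermitian.mulVec_dotProduct {ι : Type*} [Fintype ι] {H : Matrix ι ι ℝ}
    (hH : H.IsHermitian) (u v : ι → ℝ) : (H *ᵥ u) ⬝ᵥ v = u ⬝ᵥ (H *ᵥ v) := by
  rw [dotProduct_mulVec, ← mulVec_transpose, ← conjTranspose_eq_transpose_of_trivial, hH.eq]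

lemma PosDef.sq_dotProduct_le (hA : A.PosDef) (y z : n → ℝ) :
    (y ⬝ᵥ z) ^ 2 ≤ (y ⬝ᵥ (A⁻¹ *ᵥ y)) * (z ⬝ᵥ (A *ᵥ z)) := by
  have hAA : A *ᵥ (A⁻¹ *ᵥ y) = y := by
    rw [mulVec_mulVec, mul_nonsing_inv A hA.det_pos.ne'.isUnit, one_mulVec]
  have := (toBilin' A).apply_mul_apply_le_of_forall_zero_le
    (fun v => by simpa [toBilin'_apply'] using hA.posSemidef.dotProduct_mulVec_nonneg v)
    (A⁻¹ *ᵥ y) z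
  simp only [toBilin'_apply', hAA] at this
  rwa [hA.inv.1.mulVec_dotProduct, hA.inv.1.mulVec_dotProduct, mulVec_mulVec,
    nonsing_inv_mul _ hA.det_pos.ne'.isUnit, one_mulVec, dotProduct_comm z y, ← sq] at this

lemma IsHermitian.mpow_eq (hA : A.IsHermitian) (s : ℝ) :
    mpow A s = (hA.eigenvectorUnitary : Matrix n n ℝ) *
      diagonal (fun i => hA.eigenvalues i ^ s) * star (hA.eigenvectorUnitary : Matrix n n ℝ) :=
  dif_pos hA

lemma IsHermitian.mpow_one (hA : A.IsHermitian) : mpow A 1 = A := by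
  simpa [hA.mpow_eq, Unitary.conjStarAlgAut_apply] using hA.spectral_theorem.symm

lemma IsHermitian.mpow_zero (hA : A.IsHermitian) : mpow A 0 = 1 := by
  simp [hA.mpow_eq]

lemma PosDef.mpow_mul_mpow (hA : A.PosDef) (s r : ℝ) :
    mpow A s * mpow A r = mpow A (s + r) := by
  have hU := Unitary.coe_star_mul_self hA.1.eigenvectorUnitary
  simp only [hA.1.mpow_eq, Matrix.mul_assoc]
  rw [← Matrix.mul_assoc (star _), hU, Matrix.one_mul, ← Matrix.mul_assoc (diagonal _),
    diagonal_mul_diagonal]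
  simp only [← Real.rpow_add (hA.eigenvalues_pos _)]

lemma PosDef.mpow_neg_one (hA : A.PosDef) : mpow A (-1) = A⁻¹ := by
  refine (inv_eq_left_inv ?_).symm
  nth_rw 2 [← hA.1.mpow_one]
  rw [hA.mpow_mul_mpow, neg_add_cancel, hA.1.mpow_zero]

lemma PosDef.posDef_mpow (hA : A.PosDef) (s : ℝ) : (mpow A s).PosDef := by
  rw [hA.1.mpow_eq, star_eq_conjTranspose]
  refine PosDef.mul_mul_conjTranspose_same ?_ (vecMul_injective_iff_isUnit.2 ?_)
  · exact posDef_diagonal_iff.2 fun i => Real.rpow_pos_of_pos (hA.eigenvalues_pos i) s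
  · exact Unitary.isUnit_coe ..

lemma IsHermitian.dotProduct_mpow_mulVec (hA : A.IsHermitian) (s : ℝ) (x : n → ℝ) :
    x ⬝ᵥ (mpow A s *ᵥ x) = ∑ i, hA.eigenvalues i ^ s *
      ((star (hA.eigenvectorUnitary : Matrix n n ℝ) *ᵥ x) i) ^ 2 := by
  rw [hA.mpow_eq, ← mulVec_mulVec, ← mulVec_mulVec, dotProduct_mulVec, ← mulVec_transpose,
    star_eq_conjTranspose, conjTranspose_eq_transpose_of_trivial]
  simp only [dotProduct, mulVec_diagonal]
  exact Finset.sum_congr rfl fun i _ => by ring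

lemma PosDef.dotProduct_mpow_mulVec_le (hA : A.PosDef) {t : ℝ} (ht0 : 0 ≤ t) (ht1 : t ≤ 1)
    (a b : ℝ) (x : n → ℝ) :
    x ⬝ᵥ (mpow A ((1 - t) * a + t * b) *ᵥ x) ≤
      (x ⬝ᵥ (mpow A a *ᵥ x)) ^ (1 - t) * (x ⬝ᵥ (mpow A b *ᵥ x)) ^ t := by
  simp only [hA.1.dotProduct_mpow_mulVec]
  exact Finset.univ.sum_rpow_mul_le_rpow_mul_rpow ht0 ht1 a b hA.eigenvalues_pos
    fun _ => sq_nonneg _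

theorem PosDef.dotProduct_mulVec_mul_dotProduct_inv_mulVec_le (hA : A.PosDef) {m M : ℝ}
    (hm : 0 < m) (hmM : m ≤ M) (hmA : (A - m • 1).PosSemidef) (hAM : (M • 1 - A).PosSemidef)
    (y : n → ℝ) :
    (y ⬝ᵥ (A *ᵥ y)) * (y ⬝ᵥ (A⁻¹ *ᵥ y)) ≤ (M + m) ^ 2 / (4 * M * m) * (y ⬝ᵥ y) ^ 2 := by
  calc (y ⬝ᵥ (A *ᵥ y)) * (y ⬝ᵥ (A⁻¹ *ᵥ y))
      = (y ⬝ᵥ (mpow A 1 *ᵥ y)) * (y ⬝ᵥ (mpow A (-1) *ᵥ y)) := by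
        rw [hA.1.mpow_one, hA.mpow_neg_one]
    _ ≤ (M + m) ^ 2 / (4 * M * m) * (y ⬝ᵥ (mpow A 0 *ᵥ y)) ^ 2 := by
        simp only [hA.1.dotProduct_mpow_mulVec, Real.rpow_one, Real.rpow_neg_one, Real.rpow_zero,
          one_mul]
        exact Finset.univ.sum_mul_mul_sum_inv_mul_le hm hmM
          (fun i _ => ⟨hA.1.le_eigenvalues hmA i, hA.1.eigenvalues_le hAM i⟩)
          fun _ _ => sq_nonneg _
    _ = (M + m) ^ 2 / (4 * M * m) * (y ⬝ᵥ y) ^ 2 := by rw [hA.1.mpow_zero, one_mulVec]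

lemma PosDef.posDef_gmean (hA : A.PosDef) (hB : B.PosDef) (t : ℝ) : (gmean t A B).PosDef := by
  have hR := hA.posDef_mpow (1 / 2)
  have hR' := hA.posDef_mpow (-(1 / 2))
  exact ((hB.mul_mul_of_isHermitian hR'.1 hR'.isUnit).posDef_mpow t).mul_mul_of_isHermitian
    hR.1 hR.isUnit

lemma PosDef.gmean_half_mul_inv_mul_gmean_half (hA : A.PosDef) (hB : B.PosDef) :
    gmean (1 / 2) A B * A⁻¹ * gmean (1 / 2) A B = B := by
  have hpow : ∀ s r, mpow A s * mpow A r = mpow A (s + r) := hA.mpow_mul_mpow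
  set R := mpow A (1 / 2)
  set R' := mpow A (-(1 / 2))
  set N := mpow (R' * B * R') (1 / 2)
  have hRR' : R * R' = 1 := by rw [hpow, add_neg_cancel, hA.1.mpow_zero]
  have hR'R : R' * R = 1 := by rw [hpow, neg_add_cancel, hA.1.mpow_zero]
  have hRAR : R * A⁻¹ * R = 1 := by
    rw [← hA.mpow_neg_one, hpow, hpow]
    norm_num [hA.1.mpow_zero]
  have hNN : N * N = R' * B * R' := by
    have hR' : R'.PosDef := hA.posDef_mpow _
    have hZ := hB.mul_mul_of_isHermitian hR'.1 hR'.isUnit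
    rw [hZ.mpow_mul_mpow, add_halves, hZ.1.mpow_one]
  calc R * N * R * A⁻¹ * (R * N * R) = R * N * (R * A⁻¹ * R) * N * R := by
        simp only [Matrix.mul_assoc]
    _ = (R * R') * B * (R' * R) := by
        rw [hRAR, Matrix.mul_one, Matrix.mul_assoc R N N, hNN]
        simp only [Matrix.mul_assoc]
    _ = B := by rw [hRR', hR'R, Matrix.one_mul, Matrix.mul_one]

theorem PosDef.dotProduct_mpow_mul_mul_mpow_mulVec_le {F : Matrix n n ℝ} (hA : A.PosDef)
    (hF : F.PosDef) {m M t : ℝ} (hm : 0 < m) (hmM : m ≤ M) (hmA : (A - m • 1).PosSemidef)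
    (hAM : (M • 1 - A).PosSemidef) (ht0 : 0 ≤ t) (ht1 : t ≤ 1) {x : n → ℝ} (hx : x ≠ 0) :
    x ⬝ᵥ ((mpow F t * A * mpow F t) *ᵥ x) ≤
      (M + m) ^ 2 / (4 * M * m) * ((x ⬝ᵥ (A *ᵥ x)) ^ (1 - t) * (x ⬝ᵥ ((F * A * F) *ᵥ x)) ^ t) := by
  have hG := hF.posDef_mpow t
  set y := mpow F t *ᵥ x
  set q := y ⬝ᵥ (A⁻¹ *ᵥ y)
  have hshift : ∀ s, y ⬝ᵥ (mpow F s *ᵥ x) = x ⬝ᵥ (mpow F (t + s) *ᵥ x) := fun s => by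
    rw [hG.1.mulVec_dotProduct, mulVec_mulVec, hF.mpow_mul_mpow]
  have hyy : y ⬝ᵥ y = x ⬝ᵥ (mpow F (t + t) *ᵥ x) := hshift t
  have hyx : y ⬝ᵥ x = x ⬝ᵥ (mpow F (t + 0) *ᵥ x) := by
    rw [← hshift, hF.1.mpow_zero, one_mulVec]
  have hyFx : y ⬝ᵥ (F *ᵥ x) = x ⬝ᵥ (mpow F (t + 1) *ᵥ x) := by rw [← hshift, hF.1.mpow_one]
  have hpos : ∀ s, 0 ≤ x ⬝ᵥ (mpow F s *ᵥ x) := fun s => by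
    simpa using (hF.posDef_mpow s).posSemidef.dotProduct_mulVec_nonneg x
  have hholder : y ⬝ᵥ y ≤ (y ⬝ᵥ x) ^ (1 - t) * (y ⬝ᵥ (F *ᵥ x)) ^ t := by
    rw [hyy, hyx, hyFx, show t + t = (1 - t) * (t + 0) + t * (t + 1) by ring]
    exact hF.dotProduct_mpow_mulVec_le ht0 ht1 _ _ x
  have hcsB : (y ⬝ᵥ (F *ᵥ x)) ^ 2 ≤ q * (x ⬝ᵥ ((F * A * F) *ᵥ x)) := by
    simpa only [← mulVec_mulVec, hF.1.mulVec_dotProduct] using hA.sq_dotProduct_le y (F *ᵥ x)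
  have hq : 0 < q := by
    have hy : y ≠ 0 := fun h =>
      hx (mulVec_injective_iff_isUnit.2 hG.isUnit (h.trans (mulVec_zero _).symm))
    simpa using hA.inv.dotProduct_mulVec_pos hy
  have hsq := sq_le_mul_rpow_mul_rpow ht0 ht1 hq (hyx ▸ hpos _) (hyFx ▸ hpos _) (hyy ▸ hpos _)
    hholder (hA.sq_dotProduct_le y x) hcsB
  rw [← mulVec_mulVec, ← mulVec_mulVec, ← hG.1.mulVec_dotProduct]
  refine le_of_mul_le_mul_right ?_ hq
  calc (y ⬝ᵥ (A *ᵥ y)) * q ≤ (M + m) ^ 2 / (4 * M * m) * (y ⬝ᵥ y) ^ 2 :=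
        hA.dotProduct_mulVec_mul_dotProduct_inv_mulVec_le hm hmM hmA hAM y
    _ ≤ (M + m) ^ 2 / (4 * M * m) * (q * ((x ⬝ᵥ (A *ᵥ x)) ^ (1 - t) *
          (x ⬝ᵥ ((F * A * F) *ᵥ x)) ^ t)) :=
        mul_le_mul_of_nonneg_left hsq (div_nonneg (sq_nonneg _) (by nlinarith))
    _ = _ := by ring

end Matrix

open Matrix

theorem smean_inner_bound_general (t m M : ℝ) (ht0 : 0 ≤ t) (ht1 : t ≤ 1)
    (hm : 0 < m) (hmM : m ≤ M)
    (A B : Matrix n n ℝ) (hA : A.PosDef) (hB : B.PosDef)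
    (hmA : (A - m • (1 : Matrix n n ℝ)).PosSemidef)
    (hAM : (M • (1 : Matrix n n ℝ) - A).PosSemidef)
    (x : n → ℝ) (hx : x ⬝ᵥ x = 1) :
    x ⬝ᵥ (smean t A B *ᵥ x) ≤
      ((M ^ (1 + t) + m ^ (1 + t)) ^ 2 / (4 * M ^ (1 + t) * m ^ (1 + t))) *
        (x ⬝ᵥ (A *ᵥ x)) ^ (1 - t) * (x ⬝ᵥ (B *ᵥ x)) ^ t := by
  have hx0 : x ≠ 0 := by
    rintro rfl
    simp at hx
  have hF := hA.inv.posDef_gmean hB (1 / 2)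
  have hFAF : gmean (1 / 2) A⁻¹ B * A * gmean (1 / 2) A⁻¹ B = B := by
    simpa [nonsing_inv_nonsing_inv A hA.det_pos.ne'.isUnit] using
      hA.inv.gmean_half_mul_inv_mul_gmean_half hB
  have hquad : ∀ {P : Matrix n n ℝ}, P.PosDef → 0 ≤ x ⬝ᵥ (P *ᵥ x) := fun hP => by
    simpa using (hP.dotProduct_mulVec_pos hx0).le
  calc x ⬝ᵥ (smean t A B *ᵥ x)
      ≤ (M + m) ^ 2 / (4 * M * m) * ((x ⬝ᵥ (A *ᵥ x)) ^ (1 - t) * (x ⬝ᵥ (B *ᵥ x)) ^ t) := by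
        simpa only [smean, hFAF] using
          hA.dotProduct_mpow_mul_mul_mpow_mulVec_le hF hm hmM hmA hAM ht0 ht1 hx0
    _ ≤ (M ^ (1 + t) + m ^ (1 + t)) ^ 2 / (4 * M ^ (1 + t) * m ^ (1 + t)) *
          ((x ⬝ᵥ (A *ᵥ x)) ^ (1 - t) * (x ⬝ᵥ (B *ᵥ x)) ^ t) :=
        mul_le_mul_of_nonneg_right (add_sq_div_mul_le_rpow hm hmM ht0)
          (mul_nonneg (Real.rpow_nonneg (hquad hA) _) (Real.rpow_nonneg (hquad hB) _))
    _ = _ := (mul_assoc ..).symm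

theorem smean_inner_bound (t m M : ℝ) (ht0 : 0 ≤ t) (ht1 : t ≤ 1)
    (hm : 0 < m) (hmM : m ≤ M)
    (A B : Matrix n n ℝ) (hA : A.PosDef) (hB : B.PosDef)
    (hmA : (A - m • (1 : Matrix n n ℝ)).PosSemidef)
    (hAM : (M • (1 : Matrix n n ℝ) - A).PosSemidef)
    (hmB : (B - m • (1 : Matrix n n ℝ)).PosSemidef)
    (hBM : (M • (1 : Matrix n n ℝ) - B).PosSemidef)
    (x : n → ℝ) (hx : x ⬝ᵥ x = 1) :
    x ⬝ᵥ (smean t A B *ᵥ x) ≤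
      ((M ^ (1 + t) + m ^ (1 + t)) ^ 2 / (4 * M ^ (1 + t) * m ^ (1 + t))) *
        (x ⬝ᵥ (A *ᵥ x)) ^ (1 - t) * (x ⬝ᵥ (B *ᵥ x)) ^ t :=
  smean_inner_bound_general t m M ht0 ht1 hm hmM A B hA hB hmA hAM x hx
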